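/- Let w₁, w₂ be nonzero reals with |w₁| ≠ |w₂|, and let μ be a Borel probability measure on ℝ with ∫ x² dμ(x) < ∞ that is not a Dirac measure. Let μ_abs denote the pushforward of μ under x ↦ |x|. Then R_s(μ_abs) = R_s(μ) if and only if μ((−∞,0)) = 0 or μ((0,∞)) = 0, i.e. if and only if the support of μ is contained in [0,∞) or in (−∞,0]. (Lemma 2, equality condition.) -/

import Mathlib

open MeasureTheory Real Filter

/-- The standard Gaussian tail function `Q(x) = ∫_x^∞ (2π)^{-1/2} e^{-u²/2} du`. -/
noncomputable def gaussQ (x : ℝ) : ℝ :=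
  ∫ u in Set.Ioi x, (Real.sqrt (2 * Real.pi))⁻¹ * Real.exp (-u ^ 2 / 2)

/-- `η(t) = -t log t` (with `η(0) = 0`, automatic since `Real.log 0 = 0`). -/
noncomputable def eta (t : ℝ) : ℝ := -t * Real.log t

/-- The binary entropy function `h(p) = -p log p - (1-p) log (1-p)`. -/
noncomputable def binEnt (p : ℝ) : ℝ := eta p + eta (1 - p)

/-- `I(μ, w) = h(∫ Q(w·x) dμ) - ∫ h(Q(w·x)) dμ`, the mutual information of the real
Gaussian channel `Y = sgn(w·X + N)`, `N ~ N(0,1)`, with a one-bit ADC and input `X ~ μ`. -/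
noncomputable def miMeas (μ : Measure ℝ) (w : ℝ) : ℝ :=
  binEnt (∫ x, gaussQ (w * x) ∂μ) - ∫ x, binEnt (gaussQ (w * x)) ∂μ

/-- The Wyner secrecy rate `R_s(μ) = I(μ, w₁) - I(μ, w₂)`. -/
noncomputable def wynerRs (w₁ w₂ : ℝ) (μ : Measure ℝ) : ℝ := miMeas μ w₁ - miMeas μ w₂

/-!
Write `a(w)` and `p(w)` for the probability of the output `-1` under the folded input `|X|` and
under `X`. Since `h ∘ Q` is even, the conditional-entropy terms of `I(μ_abs, w)` and `I(μ, w)`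
coincide, so `I(μ_abs, w) - I(μ, w) = h(a(w)) - h(p(w))`: an even function `G` of `w`, and
`R_s(μ_abs) - R_s(μ) = G(|w₁|) - G(|w₂|)`. If `μ` lives on one half-line, `μ_abs` is `μ` or its
reflection, which have the same rates. Otherwise `G` is strictly decreasing on `[0, ∞)`: for
`w > 0` we have `a < min(p, 1 - p)`, so the log-odds `h'(a)` strictly exceed `|h'(p)|`, while
`|p'(w)| = |∫ x φ(w x) dμ| ≤ ∫ |x| φ(w x) dμ = -a'(w)`, which is positive (`φ` the standard
normal density).
-/

open ProbabilityTheory Set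

local notation "φ" => gaussianPDFReal 0 1

lemma gaussQ_eq_setIntegral (x : ℝ) : gaussQ x = ∫ u in Ioi x, φ u := by
  simp [gaussQ, gaussianPDFReal]

lemma gaussianPDFReal_zero_one_neg (u : ℝ) : φ (-u) = φ u := by
  simp [gaussianPDFReal]

lemma gaussianPDFReal_zero_one_abs (u : ℝ) : φ |u| = φ u := by
  simp [gaussianPDFReal]

lemma continuous_gaussianPDFReal (m : ℝ) (v : NNReal) : Continuous (gaussianPDFReal m v) := by
  unfold gaussianPDFReal; fun_prop

lemma abs_mul_gaussianPDFReal_le_one (t : ℝ) : |t| * φ t ≤ 1 := by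
  have hexp : |t| * exp (-t ^ 2 / 2) ≤ 1 := by
    have : |t| ≤ exp (t ^ 2 / 2) := by
      nlinarith [add_one_le_exp (t ^ 2 / 2), sq_abs t, sq_nonneg (|t| - 1)]
    calc |t| * exp (-t ^ 2 / 2) ≤ exp (t ^ 2 / 2) * exp (-t ^ 2 / 2) := by gcongr
      _ = 1 := by rw [← exp_add]; ring_nf; exact exp_zero
  have hnorm : (√(2 * π))⁻¹ ≤ 1 :=
    inv_le_one_of_one_le₀ (one_le_sqrt.2 (by linarith [pi_gt_three]))
  calc |t| * φ t = (√(2 * π))⁻¹ * (|t| * exp (-t ^ 2 / 2)) := by simp [gaussianPDFReal]; ring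
    _ ≤ 1 * 1 := by gcongr
    _ = 1 := one_mul 1

lemma abs_mul_gaussianPDFReal_mul_le {w : ℝ} (hw : w ≠ 0) (x : ℝ) :
    |x * φ (w * x)| ≤ |w|⁻¹ :=
  calc |x * φ (w * x)| = |w|⁻¹ * (|w * x| * φ (w * x)) := by
        rw [abs_mul, abs_mul, abs_of_nonneg (gaussianPDFReal_nonneg _ _ _)]
        field_simp
    _ ≤ |w|⁻¹ * 1 := by gcongr; exact abs_mul_gaussianPDFReal_le_one _
    _ = |w|⁻¹ := mul_one _

lemma gaussQ_neg (x : ℝ) : gaussQ (-x) = 1 - gaussQ x := by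
  have hint := (integrable_gaussianPDFReal 0 1).integrableOn (s := Iic x)
  have hreflect : gaussQ (-x) = ∫ u in Iic x, φ u := by
    rw [gaussQ_eq_setIntegral, ← neg_neg x, ← integral_comp_neg_Ioi, neg_neg]
    simp only [gaussianPDFReal_zero_one_neg]
  rw [hreflect, gaussQ_eq_setIntegral, eq_sub_iff_add_eq,
    intervalIntegral.integral_Iic_add_Ioi hint (integrable_gaussianPDFReal 0 1).integrableOn,
    integral_gaussianPDFReal_eq_one 0 one_ne_zero]

lemma hasDerivAt_gaussQ (x : ℝ) : HasDerivAt gaussQ (-φ x) x := by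
  have hint := (integrable_gaussianPDFReal 0 1).integrableOn (s := Ioi (0 : ℝ))
  have hftc : HasDerivAt (fun z => ∫ u in (0 : ℝ)..z, φ u) (φ x) x :=
    intervalIntegral.integral_hasDerivAt_right (integrable_gaussianPDFReal 0 1).intervalIntegrable
      ((continuous_gaussianPDFReal 0 1).stronglyMeasurableAtFilter _ _)
      (continuous_gaussianPDFReal 0 1).continuousAt
  refine (hftc.const_sub (gaussQ 0)).congr_of_eventuallyEq (Eventually.of_forall fun z => ?_)
  dsimp only
  rw [gaussQ_eq_setIntegral, gaussQ_eq_setIntegral, ← intervalIntegral.integral_Ioi_sub_Ioi' hint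
    (integrable_gaussianPDFReal 0 1).integrableOn, sub_sub_cancel]

lemma continuous_gaussQ : Continuous gaussQ :=
  continuous_iff_continuousAt.2 fun x => (hasDerivAt_gaussQ x).continuousAt

lemma gaussQ_strictAnti : StrictAnti gaussQ :=
  strictAnti_of_deriv_neg fun x => by
    rw [(hasDerivAt_gaussQ x).deriv, neg_lt_zero]
    exact gaussianPDFReal_pos 0 1 x one_ne_zero

lemma gaussQ_pos (x : ℝ) : 0 < gaussQ x := by
  have hnonneg : 0 ≤ gaussQ (x + 1) := by
    rw [gaussQ_eq_setIntegral]
    exact setIntegral_nonneg measurableSet_Ioi fun u _ => gaussianPDFReal_nonneg 0 1 u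
  exact hnonneg.trans_lt (gaussQ_strictAnti (lt_add_one x))

lemma gaussQ_lt_one (x : ℝ) : gaussQ x < 1 := by
  have := gaussQ_neg (-x)
  rw [neg_neg] at this
  linarith [gaussQ_pos (-x)]

lemma binEnt_eq_binEntropy : binEnt = binEntropy :=
  funext fun p => by simp [binEnt, eta, binEntropy_eq_negMulLog_add_negMulLog_one_sub, negMulLog]

lemma abs_log_odds_lt {a p : ℝ} (ha : 0 < a) (hap : a < p) (hap' : a < 1 - p) :
    |log (1 - p) - log p| < log (1 - a) - log a := by
  have h₁ := log_lt_log ha hap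
  have h₂ := log_lt_log ha hap'
  have h₃ := log_lt_log (ha.trans hap') (by linarith : 1 - p < 1 - a)
  have h₄ := log_lt_log (ha.trans hap) (by linarith : p < 1 - a)
  exact abs_lt.2 ⟨by linarith, by linarith⟩

lemma integral_lt_integral_of_le_of_measure_setOf_lt_ne_zero {α : Type*} [MeasurableSpace α]
    {μ : Measure α} {f g : α → ℝ} (hf : Integrable f μ) (hg : Integrable g μ) (hle : f ≤ g)
    (hlt : μ {x | f x < g x} ≠ 0) : ∫ x, f x ∂μ < ∫ x, g x ∂μ := by
  rw [← sub_pos, ← integral_sub hg hf,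
    integral_pos_iff_support_of_nonneg (fun x => sub_nonneg.2 (hle x)) (hg.sub hf)]
  convert pos_iff_ne_zero.2 hlt using 2
  ext x
  simp [sub_eq_zero, (hle x).lt_iff_ne, eq_comm]

/-- The probability that the channel output `sgn (w X + N)` equals `-1` when `X ∼ ν`. -/
noncomputable def outputProb (ν : Measure ℝ) (w : ℝ) : ℝ := ∫ x, gaussQ (w * x) ∂ν

lemma miMeas_eq (ν : Measure ℝ) (w : ℝ) :
    miMeas ν w = binEntropy (outputProb ν w) - ∫ x, binEntropy (gaussQ (w * x)) ∂ν := by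
  rw [miMeas, binEnt_eq_binEntropy, outputProb]

lemma outputProb_map_neg (ν : Measure ℝ) (w : ℝ) :
    outputProb (ν.map Neg.neg) w = outputProb ν (-w) := by
  rw [outputProb, integral_map (f := fun x => gaussQ (w * x)) measurable_neg.aemeasurable
    (continuous_gaussQ.comp (continuous_const_mul w)).aestronglyMeasurable]
  simp [outputProb]

section OutputProb

variable {ν : Measure ℝ} [IsProbabilityMeasure ν]

lemma integrable_gaussQ_comp {f : ℝ → ℝ} (hf : Measurable f) :
    Integrable (fun x => gaussQ (f x)) ν := by
  refine (integrable_const (1 : ℝ)).mono'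
    (continuous_gaussQ.measurable.comp hf).aestronglyMeasurable
    (Eventually.of_forall fun x => ?_)
  rw [norm_of_nonneg (gaussQ_pos _).le]
  exact (gaussQ_lt_one _).le

lemma outputProb_neg (w : ℝ) : outputProb ν (-w) = 1 - outputProb ν w := by
  simp only [outputProb, neg_mul, gaussQ_neg]
  rw [integral_sub (integrable_const 1) (integrable_gaussQ_comp (measurable_const_mul w))]
  simp

lemma outputProb_pos (w : ℝ) : 0 < outputProb ν w :=
  (integral_pos_iff_support_of_nonneg (fun x => (gaussQ_pos _).le)
    (integrable_gaussQ_comp (measurable_const_mul w))).2 <| by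
      simp [Function.support_eq_univ fun x => (gaussQ_pos (w * x)).ne']

lemma outputProb_lt_one (w : ℝ) : outputProb ν w < 1 := by
  linarith [outputProb_neg (ν := ν) w, outputProb_pos (ν := ν) (-w)]

lemma continuous_outputProb : Continuous (outputProb ν) :=
  continuous_of_dominated
    (fun w => (continuous_gaussQ.comp (continuous_const_mul w)).aestronglyMeasurable)
    (fun w => Eventually.of_forall fun x => by
      rw [norm_of_nonneg (gaussQ_pos _).le]; exact (gaussQ_lt_one _).le)
    (integrable_const 1)
    (Eventually.of_forall fun x => continuous_gaussQ.comp (continuous_mul_const x))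

lemma integrable_mul_gaussianPDFReal_mul {w : ℝ} (hw : w ≠ 0) :
    Integrable (fun x => x * φ (w * x)) ν :=
  (integrable_const |w|⁻¹).mono'
    (continuous_id.mul ((continuous_gaussianPDFReal 0 1).comp
      (continuous_const_mul w))).aestronglyMeasurable
    (Eventually.of_forall (abs_mul_gaussianPDFReal_mul_le hw))

lemma hasDerivAt_outputProb {w : ℝ} (hw : w ≠ 0) :
    HasDerivAt (outputProb ν) (-∫ x, x * φ (w * x) ∂ν) w := by
  have hw' : 0 < |w| / 2 := half_pos (abs_pos.2 hw)
  have hball : ∀ v ∈ Metric.ball w (|w| / 2), |w| / 2 ≤ |v| := fun v hv => by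
    rw [Metric.mem_ball, Real.dist_eq] at hv
    linarith [abs_sub_abs_le_abs_sub w v, abs_sub_comm v w]
  rw [← integral_neg]
  refine (hasDerivAt_integral_of_dominated_loc_of_deriv_le (F' := fun v x => -(x * φ (v * x)))
    (bound := fun _ => (|w| / 2)⁻¹)
    (Metric.ball_mem_nhds w hw')
    (Eventually.of_forall fun v =>
      (continuous_gaussQ.comp (continuous_const_mul v)).aestronglyMeasurable)
    (integrable_gaussQ_comp (measurable_const_mul w))
    (integrable_mul_gaussianPDFReal_mul hw).neg.aestronglyMeasurable
    (Eventually.of_forall fun x v hv => ?_) (integrable_const _)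
    (Eventually.of_forall fun x v _ => ?_)).2
  · rw [norm_neg, norm_eq_abs]
    exact (abs_mul_gaussianPDFReal_mul_le (abs_pos.1 (hw'.trans_le (hball v hv))) x).trans
      (inv_anti₀ hw' (hball v hv))
  · have := (hasDerivAt_gaussQ (v * x)).comp v (hasDerivAt_mul_const x)
    rwa [neg_mul, mul_comm _ x] at this

lemma miMeas_neg (w : ℝ) : miMeas ν (-w) = miMeas ν w := by
  simp only [miMeas_eq, outputProb_neg, binEntropy_one_sub, neg_mul, gaussQ_neg]

lemma miMeas_map_neg (w : ℝ) : miMeas (ν.map Neg.neg) w = miMeas ν w := by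
  have := Measure.isProbabilityMeasure_map (μ := ν) measurable_neg.aemeasurable
  rw [miMeas_eq, outputProb_map_neg, integral_map (f := fun x => binEntropy (gaussQ (w * x)))
    measurable_neg.aemeasurable
    (binEntropy_continuous.comp
      (continuous_gaussQ.comp (continuous_const_mul w))).aestronglyMeasurable,
    ← miMeas_neg, miMeas_eq]
  simp only [mul_neg, neg_mul]

end OutputProb

lemma binEntropy_gaussQ_mul_abs (w x : ℝ) :
    binEntropy (gaussQ (w * |x|)) = binEntropy (gaussQ (w * x)) := by
  rcases abs_choice x with h | h <;> simp [h, gaussQ_neg]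

lemma map_abs_eq_self {μ : Measure ℝ} (h : μ (Iio 0) = 0) : μ.map (fun x : ℝ => |x|) = μ := by
  refine (Measure.map_congr ?_).trans Measure.map_id
  filter_upwards [measure_eq_zero_iff_ae_notMem.1 h] with x hx
  exact abs_of_nonneg (not_lt.1 hx)

lemma map_abs_eq_map_neg {μ : Measure ℝ} (h : μ (Ioi 0) = 0) :
    μ.map (fun x : ℝ => |x|) = μ.map Neg.neg := by
  refine Measure.map_congr ?_
  filter_upwards [measure_eq_zero_iff_ae_notMem.1 h] with x hx
  exact abs_of_nonpos (not_lt.1 hx)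

noncomputable def foldGain (μ : Measure ℝ) (w : ℝ) : ℝ :=
  miMeas (μ.map (fun x : ℝ => |x|)) w - miMeas μ w

section Folding

variable {μ : Measure ℝ}

lemma outputProb_map_abs (w : ℝ) :
    outputProb (μ.map (fun x : ℝ => |x|)) w = ∫ x, gaussQ (w * |x|) ∂μ :=
  integral_map (f := fun x => gaussQ (w * x)) continuous_abs.aemeasurable
    (continuous_gaussQ.comp (continuous_const_mul w)).aestronglyMeasurable

lemma integral_mul_gaussianPDFReal_mul_map_abs (w : ℝ) :
    ∫ x, x * φ (w * x) ∂(μ.map (fun x : ℝ => |x|)) = ∫ x, |x * φ (w * x)| ∂μ := by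
  rw [integral_map (f := fun x => x * φ (w * x)) continuous_abs.aemeasurable
    (continuous_id.mul ((continuous_gaussianPDFReal 0 1).comp
      (continuous_const_mul w))).aestronglyMeasurable]
  congr 1 with x
  rw [abs_mul, abs_of_nonneg (gaussianPDFReal_nonneg _ _ _),
    ← gaussianPDFReal_zero_one_abs (w * x), abs_mul, ← gaussianPDFReal_zero_one_abs (w * |x|),
    abs_mul, abs_abs]

lemma foldGain_eq (w : ℝ) :
    foldGain μ w = binEntropy (outputProb (μ.map (fun x : ℝ => |x|)) w)
      - binEntropy (outputProb μ w) := by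
  rw [foldGain, miMeas_eq, miMeas_eq, integral_map (f := fun x => binEntropy (gaussQ (w * x)))
    continuous_abs.aemeasurable (binEntropy_continuous.comp
      (continuous_gaussQ.comp (continuous_const_mul w))).aestronglyMeasurable]
  simp only [binEntropy_gaussQ_mul_abs]
  ring

variable [IsProbabilityMeasure μ]

lemma foldGain_abs (w : ℝ) : foldGain μ |w| = foldGain μ w := by
  have := Measure.isProbabilityMeasure_map (μ := μ) continuous_abs.aemeasurable
  rcases abs_choice w with h | h
  · rw [h]
  · rw [h, foldGain, foldGain, miMeas_neg, miMeas_neg]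

lemma continuous_foldGain : Continuous (foldGain μ) := by
  have := Measure.isProbabilityMeasure_map (μ := μ) continuous_abs.aemeasurable
  simp only [funext foldGain_eq]
  exact (binEntropy_continuous.comp continuous_outputProb).sub
    (binEntropy_continuous.comp continuous_outputProb)

lemma outputProb_map_abs_lt {v w : ℝ} (hv : |v| ≤ w) (h : μ {x | v * x < w * |x|} ≠ 0) :
    outputProb (μ.map (fun x : ℝ => |x|)) w < outputProb μ v := by
  rw [outputProb_map_abs]
  refine integral_lt_integral_of_le_of_measure_setOf_lt_ne_zero
    (integrable_gaussQ_comp (by fun_prop)) (integrable_gaussQ_comp (by fun_prop))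
    (fun x => gaussQ_strictAnti.antitone ?_) ?_
  · calc v * x ≤ |v * x| := le_abs_self _
      _ = |v| * |x| := abs_mul v x
      _ ≤ w * |x| := by gcongr
  · simpa only [gaussQ_strictAnti.lt_iff_gt] using h

lemma outputProb_map_abs_lt_self (hneg : μ (Iio 0) ≠ 0) {w : ℝ} (hw : 0 < w) :
    outputProb (μ.map (fun x : ℝ => |x|)) w < outputProb μ w := by
  refine outputProb_map_abs_lt (abs_of_pos hw).le fun h0 => hneg (measure_mono_null ?_ h0)
  intro x (hx : x < 0)
  show w * x < w * |x|
  rw [abs_of_neg hx]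
  nlinarith

lemma outputProb_map_abs_lt_one_sub (hpos : μ (Ioi 0) ≠ 0) {w : ℝ} (hw : 0 < w) :
    outputProb (μ.map (fun x : ℝ => |x|)) w < 1 - outputProb μ w := by
  rw [← outputProb_neg]
  refine outputProb_map_abs_lt (by rw [abs_neg, abs_of_pos hw]) fun h0 =>
    hpos (measure_mono_null ?_ h0)
  intro x (hx : 0 < x)
  show -w * x < w * |x|
  rw [abs_of_pos hx]
  nlinarith

lemma integral_abs_mul_gaussianPDFReal_mul_pos (h : μ (Ioi 0) ≠ 0) {w : ℝ} (hw : w ≠ 0) :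
    0 < ∫ x, |x * φ (w * x)| ∂μ := by
  rw [integral_pos_iff_support_of_nonneg (fun x => abs_nonneg _)
    (integrable_mul_gaussianPDFReal_mul hw).abs]
  refine pos_iff_ne_zero.2 fun h0 => h (measure_mono_null (fun x (hx : 0 < x) => ?_) h0)
  exact abs_ne_zero.2 (mul_ne_zero hx.ne' (gaussianPDFReal_pos 0 1 _ one_ne_zero).ne')

lemma deriv_foldGain_neg (hneg : μ (Iio 0) ≠ 0) (hpos : μ (Ioi 0) ≠ 0) {w : ℝ} (hw : 0 < w) :
    deriv (foldGain μ) w < 0 := by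
  have := Measure.isProbabilityMeasure_map (μ := μ) continuous_abs.aemeasurable
  set a := outputProb (μ.map (fun x : ℝ => |x|)) w
  set p := outputProb μ w
  set A := ∫ x, |x * φ (w * x)| ∂μ with hA_def
  set B := ∫ x, x * φ (w * x) ∂μ
  have hap : a < p := outputProb_map_abs_lt_self hneg hw
  have hap' : a < 1 - p := outputProb_map_abs_lt_one_sub hpos hw
  have hderiv : HasDerivAt (foldGain μ)
      ((log (1 - a) - log a) * -A - (log (1 - p) - log p) * -B) w := by
    rw [funext foldGain_eq, hA_def, ← integral_mul_gaussianPDFReal_mul_map_abs]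
    exact ((hasDerivAt_binEntropy (outputProb_pos w).ne' (outputProb_lt_one w).ne).comp w
      (hasDerivAt_outputProb hw.ne')).sub
      ((hasDerivAt_binEntropy (outputProb_pos w).ne' (outputProb_lt_one w).ne).comp w
        (hasDerivAt_outputProb hw.ne'))
  have hBA : |B| ≤ A := abs_integral_le_integral_abs
  have hA : 0 < A := integral_abs_mul_gaussianPDFReal_mul_pos hpos hw.ne'
  have hodds := abs_log_odds_lt (outputProb_pos w) hap hap'
  have hlpB : (log (1 - p) - log p) * B ≤ |log (1 - p) - log p| * A :=
    (le_abs_self _).trans ((abs_mul _ _).trans_le (mul_le_mul_of_nonneg_left hBA (abs_nonneg _)))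
  rw [hderiv.deriv]
  calc (log (1 - a) - log a) * -A - (log (1 - p) - log p) * -B
      ≤ (|log (1 - p) - log p| - (log (1 - a) - log a)) * A := by linarith
    _ < 0 := mul_neg_of_neg_of_pos (sub_neg.2 hodds) hA

lemma foldGain_strictAntiOn (hneg : μ (Iio 0) ≠ 0) (hpos : μ (Ioi 0) ≠ 0) :
    StrictAntiOn (foldGain μ) (Ici 0) :=
  strictAntiOn_of_deriv_neg (convex_Ici 0) continuous_foldGain.continuousOn fun w hw =>
    deriv_foldGain_neg hneg hpos (by rwa [interior_Ici] at hw)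

end Folding

theorem folded_rate_eq_iff_general (w₁ w₂ : ℝ)
    (hne : |w₁| ≠ |w₂|) (μ : Measure ℝ) [IsProbabilityMeasure μ] :
    wynerRs w₁ w₂ (μ.map (fun x : ℝ => |x|)) = wynerRs w₁ w₂ μ ↔
      (μ (Set.Iio 0) = 0 ∨ μ (Set.Ioi 0) = 0) := by
  constructor
  · intro hrate
    by_contra! hmass
    have hgain : foldGain μ |w₁| = foldGain μ |w₂| := by
      rw [foldGain_abs, foldGain_abs, foldGain, foldGain]
      unfold wynerRs at hrate
      linarith
    exact hne ((foldGain_strictAntiOn hmass.1 hmass.2).injOn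
      (abs_nonneg w₁) (abs_nonneg w₂) hgain)
  · rintro (hneg | hpos)
    · rw [map_abs_eq_self hneg]
    · rw [map_abs_eq_map_neg hpos, wynerRs, wynerRs, miMeas_map_neg, miMeas_map_neg]

/-- Lemma 2, equality condition: if `|w₁| ≠ |w₂|` and `μ` is not a Dirac measure, then
the folded distribution achieves the same Wyner secrecy rate if and only if the support
of `μ` is contained in `[0,∞)` or in `(-∞,0]`. -/
theorem folded_rate_eq_iff (w₁ w₂ : ℝ) (hw₁ : w₁ ≠ 0) (hw₂ : w₂ ≠ 0)
    (hne : |w₁| ≠ |w₂|) (μ : Measure ℝ) [IsProbabilityMeasure μ]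
    (hint : Integrable (fun x : ℝ => x ^ 2) μ)
    (hnd : ∀ x : ℝ, μ ≠ Measure.dirac x) :
    wynerRs w₁ w₂ (μ.map (fun x : ℝ => |x|)) = wynerRs w₁ w₂ μ ↔
      (μ (Set.Iio 0) = 0 ∨ μ (Set.Ioi 0) = 0) :=
  folded_rate_eq_iff_general w₁ w₂ hne μ
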